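/- arXiv:1403.6313 — 4 statements merged into one kernel-verified Lean document; each statement's English description precedes it below -/
import Mathlib

section
/- Let k ∈ ℕ and let φ : Matrix (Fin k) (Fin k) ℝ → ℝ be continuously differentiable (C¹) and satisfy φ(PᵀMP) = φ(M) for every symmetric matrix M and every orthogonal matrix P. Then for every diagonal matrix D and every pair of indices i ≠ j, the derivative of φ at D in the direction of the symmetric matrix A having entries A_{ij} = A_{ji} = 1 and all other entries 0 vanishes: (fderiv ℝ φ D)(A) = 0. -/
/-!
Conjugating by the coordinate reflection `P = diag(1, …, -1, …, 1)` (the `-1` in position `i`)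
fixes every diagonal matrix `D` and negates `A = E_ij + E_ji`. So `t ↦ φ (D + t • A)` is even
and its derivative at `0`, which is `(fderiv ℝ φ D) A`, vanishes.
-/

open Matrix

attribute [local instance] Matrix.normedAddCommGroup Matrix.normedSpace

section Calculus

variable {E F : Type*} [NormedAddCommGroup E] [NormedSpace ℝ E]
  [NormedAddCommGroup F] [NormedSpace ℝ F]

theorem HasDerivAt.eq_zero_of_even {f : ℝ → F} {f' : F} (hf : HasDerivAt f f' 0)
    (heven : Function.Even f) : f' = 0 := by
  have hneg : HasDerivAt f (-f') 0 := by
    simpa [Function.comp_def, heven _] using hf.scomp_of_eq 0 (hasDerivAt_neg 0) neg_zero.symm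
  have := IsAddTorsionFree.of_isTorsionFree ℝ F
  exact self_eq_neg.mp (hf.unique hneg)

theorem fderiv_apply_eq_zero_of_even_along {φ : E → F} {x : E} (v : E)
    (hφ : DifferentiableAt ℝ φ x) (heven : Function.Even fun t : ℝ => φ (x + t • v)) :
    fderiv ℝ φ x v = 0 := by
  have hline : HasDerivAt (fun t : ℝ => x + t • v) v 0 := by
    simpa using ((hasDerivAt_id (0 : ℝ)).smul_const v).const_add x
  have hφ' : HasFDerivAt φ (fderiv ℝ φ x) (x + (0 : ℝ) • v) := by
    simpa using hφ.hasFDerivAt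
  exact (hφ'.comp_hasDerivAt 0 hline).eq_zero_of_even heven

end Calculus

namespace Matrix

variable {n R : Type*} [DecidableEq n] [CommRing R]

def coordReflection (i : n) : Matrix n n R := diagonal fun a => if a = i then -1 else 1

def symmSingle (i j : n) : Matrix n n R :=
  of fun a b => if (a = i ∧ b = j) ∨ (a = j ∧ b = i) then 1 else 0

theorem transpose_coordReflection (i : n) :
    (coordReflection i : Matrix n n R)ᵀ = coordReflection i :=
  diagonal_transpose _

theorem isSymm_symmSingle (i j : n) : (symmSingle i j : Matrix n n R).IsSymm := by
  ext a b
  simp only [symmSingle, transpose_apply, of_apply]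
  congr 1
  exact propext (by tauto)

variable [Fintype n]

theorem coordReflection_mul_self (i : n) :
    (coordReflection i : Matrix n n R) * coordReflection i = 1 := by
  rw [coordReflection, diagonal_mul_diagonal, ← diagonal_one]
  congr 1
  ext a
  split_ifs <;> simp

theorem coordReflection_mul_mul_coordReflection_apply (i : n) (M : Matrix n n R) (a b : n) :
    (coordReflection i * M * coordReflection i : Matrix n n R) a b =
      (if a = i then -1 else 1) * M a b * (if b = i then -1 else 1) := by
  simp [coordReflection]

theorem coordReflection_conj_of_isDiag (i : n) {D : Matrix n n R} (hD : D.IsDiag) :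
    coordReflection i * D * coordReflection i = D := by
  ext a b
  rw [coordReflection_mul_mul_coordReflection_apply]
  by_cases hab : a = b
  · subst hab
    split_ifs <;> ring
  · simp [hD hab]

theorem coordReflection_conj_symmSingle {i j : n} (hij : i ≠ j) :
    coordReflection i * symmSingle i j * coordReflection i = -(symmSingle i j : Matrix n n R) := by
  ext a b
  rw [coordReflection_mul_mul_coordReflection_apply, neg_apply, symmSingle, of_apply]
  rcases em ((a = i ∧ b = j) ∨ (a = j ∧ b = i)) with (⟨rfl, rfl⟩ | ⟨rfl, rfl⟩) | h
  · simp [hij.symm]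
  · simp [hij.symm]
  · simp [h]

end Matrix

/-- if `φ` is C¹ and invariant under orthogonal conjugation on symmetric
matrices, then its derivative at any diagonal matrix vanishes in the direction of the
elementary symmetric off-diagonal matrix `A` with `A i j = A j i = 1`. -/
theorem stmt1 {k : ℕ} (φ : Matrix (Fin k) (Fin k) ℝ → ℝ)
    (hφ1 : ContDiff ℝ 1 φ)
    (hφ2 : ∀ (M P : Matrix (Fin k) (Fin k) ℝ), M.IsSymm → Pᵀ * P = 1 →
      φ (Pᵀ * M * P) = φ M)
    (D : Matrix (Fin k) (Fin k) ℝ) (hD : D.IsDiag)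
    (i j : Fin k) (hij : i ≠ j) :
    fderiv ℝ φ D
      (Matrix.of fun a b => if (a = i ∧ b = j) ∨ (a = j ∧ b = i) then (1 : ℝ) else 0) = 0 := by
  set A : Matrix (Fin k) (Fin k) ℝ := symmSingle i j
  set P : Matrix (Fin k) (Fin k) ℝ := coordReflection i
  refine fderiv_apply_eq_zero_of_even_along A (hφ1.differentiable one_ne_zero D) fun t => ?_
  have hconj : Pᵀ * (D + t • A) * P = D + (-t) • A := by
    rw [transpose_coordReflection, mul_add, add_mul, mul_smul_comm, smul_mul_assoc,
      coordReflection_conj_of_isDiag i hD, coordReflection_conj_symmSingle hij, neg_smul, smul_neg]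
  have horth : Pᵀ * P = 1 := by
    rw [transpose_coordReflection, coordReflection_mul_self]
  change φ (D + (-t) • A) = φ (D + t • A)
  rw [← hconj, hφ2 _ _ (hD.isSymm.add ((isSymm_symmSingle i j).smul t)) horth]
end

section
/- Let H be a real Hilbert space, k ∈ ℕ, and let u = (u₁,…,u_k) ∈ Hᵏ be an orthonormal family, i.e. ⟨u_i, u_j⟩ = δ_{ij} for all i, j. Define the Gram map G : Hᵏ → ℝ^{k(k+1)/2} (indexed by pairs (i,j) with i ≤ j) by G(w)_{ij} = ⟨w_i, w_j⟩. Then G is Fréchet differentiable and its Fréchet derivative at u, G'(u) : Hᵏ → ℝ^{k(k+1)/2}, given by G'(u)(φ)_{ij} = ⟨φ_i, u_j⟩ + ⟨u_i, φ_j⟩, is surjective. -/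
/-
At an orthonormal family the derivative is onto: the target value `v` is hit by
`φ_i = ∑_j a_ij u_j` with `a` the symmetric matrix `a_ij = a_ji = v_ij / 2`, since then
`⟪φ_i, u_j⟫ + ⟪u_i, φ_j⟫ = a_ij + a_ji`.
-/

open scoped RealInnerProductSpace

/-- The Gram map `G(w)_{(i,j)} = ⟪w_i, w_j⟫` for `i ≤ j`, from the product Hilbert space
`Hᵏ` to the Euclidean space indexed by pairs `(i,j)` with `i ≤ j`. -/
noncomputable def gramMap (k : ℕ) {H : Type*} [NormedAddCommGroup H] [InnerProductSpace ℝ H]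
    (w : PiLp 2 (fun _ : Fin k => H)) :
    EuclideanSpace ℝ {p : Fin k × Fin k // p.1 ≤ p.2} :=
  WithLp.toLp 2 (fun p => ⟪w p.1.1, w p.1.2⟫)

section

variable {k : ℕ} {H : Type*} [NormedAddCommGroup H] [InnerProductSpace ℝ H]

noncomputable def gramDeriv (u : PiLp 2 (fun _ : Fin k => H)) :
    PiLp 2 (fun _ : Fin k => H) →L[ℝ] EuclideanSpace ℝ {p : Fin k × Fin k // p.1 ≤ p.2} :=
  (PiLp.continuousLinearEquiv 2 ℝ _).symm.toContinuousLinearMap.comp <|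
    ContinuousLinearMap.pi fun p =>
      (fderivInnerCLM ℝ (u p.1.1, u p.1.2)).comp
        ((PiLp.proj 2 (fun _ : Fin k => H) p.1.1).prod (PiLp.proj 2 _ p.1.2))

theorem gramDeriv_apply (u φ : PiLp 2 (fun _ : Fin k => H))
    (p : {p : Fin k × Fin k // p.1 ≤ p.2}) :
    gramDeriv u φ p = ⟪φ p.1.1, u p.1.2⟫ + ⟪u p.1.1, φ p.1.2⟫ :=
  add_comm _ _

theorem hasFDerivAt_gramMap (u : PiLp 2 (fun _ : Fin k => H)) :
    HasFDerivAt (gramMap k) (gramDeriv u) u := by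
  have hcoord : ∀ p : {p : Fin k × Fin k // p.1 ≤ p.2},
      HasFDerivAt (fun w : PiLp 2 (fun _ : Fin k => H) => ⟪w p.1.1, w p.1.2⟫)
        ((fderivInnerCLM ℝ (u p.1.1, u p.1.2)).comp
          ((PiLp.proj 2 (fun _ : Fin k => H) p.1.1).prod (PiLp.proj 2 _ p.1.2))) u :=
    fun p => (PiLp.proj 2 _ p.1.1).hasFDerivAt.inner ℝ (PiLp.proj 2 _ p.1.2).hasFDerivAt
  exact (PiLp.continuousLinearEquiv 2 ℝ _).symm.hasFDerivAt.comp u (hasFDerivAt_pi.2 hcoord)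

theorem gramDeriv_surjective {u : PiLp 2 (fun _ : Fin k => H)}
    (hu : Orthonormal ℝ (fun i => u i)) :
    Function.Surjective (gramDeriv u) := by
  intro v
  let a : Fin k → Fin k → ℝ := fun i j => v ⟨(min i j, max i j), min_le_max⟩ / 2
  have ha : ∀ p : {p : Fin k × Fin k // p.1 ≤ p.2},
      a p.1.1 p.1.2 = v p / 2 ∧ a p.1.2 p.1.1 = v p / 2 := by
    rintro ⟨⟨i, j⟩, hij⟩
    simp only [a, min_eq_left hij, max_eq_right hij, min_eq_right hij, max_eq_left hij, and_self]
  refine ⟨WithLp.toLp 2 fun i => ∑ j, a i j • u j, ?_⟩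
  ext p
  rw [gramDeriv_apply, real_inner_comm]
  simp only [hu.inner_right_fintype, (ha p).1, (ha p).2]
  ring

end

theorem stmt2_general {H : Type*} [NormedAddCommGroup H] [InnerProductSpace ℝ H]
    (k : ℕ) (u : PiLp 2 (fun _ : Fin k => H)) (hu : Orthonormal ℝ (fun i => u i)) :
    ∃ G' : PiLp 2 (fun _ : Fin k => H) →L[ℝ]
        EuclideanSpace ℝ {p : Fin k × Fin k // p.1 ≤ p.2},
      HasFDerivAt (gramMap k) G' u ∧
      (∀ (φ : PiLp 2 (fun _ : Fin k => H)) (p : {p : Fin k × Fin k // p.1 ≤ p.2}),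
        G' φ p = ⟪φ p.1.1, u p.1.2⟫ + ⟪u p.1.1, φ p.1.2⟫) ∧
      Function.Surjective G' :=
  ⟨gramDeriv u, hasFDerivAt_gramMap u, gramDeriv_apply u, gramDeriv_surjective hu⟩

/-- at an orthonormal family `u ∈ Hᵏ`, the Gram map is Fréchet
differentiable with derivative `φ ↦ (⟪φ_i, u_j⟫ + ⟪u_i, φ_j⟫)_{i ≤ j}`, and this
derivative is surjective. -/
theorem stmt2 {H : Type*} [NormedAddCommGroup H] [InnerProductSpace ℝ H] [CompleteSpace H]
    (k : ℕ) (u : PiLp 2 (fun _ : Fin k => H)) (hu : Orthonormal ℝ (fun i => u i)) :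
    ∃ G' : PiLp 2 (fun _ : Fin k => H) →L[ℝ]
        EuclideanSpace ℝ {p : Fin k × Fin k // p.1 ≤ p.2},
      HasFDerivAt (gramMap k) G' u ∧
      (∀ (φ : PiLp 2 (fun _ : Fin k => H)) (p : {p : Fin k × Fin k // p.1 ≤ p.2}),
        G' φ p = ⟪φ p.1.1, u p.1.2⟫ + ⟪u p.1.1, φ p.1.2⟫) ∧
      Function.Surjective G' :=
  stmt2_general k u hu
end

section
/- Let N, k ∈ ℕ with N ≥ 2, let Ω ⊆ ℝᴺ be open, let H : ℝᵏ × ℝᵏ → ℝ be C¹, and let l₁,…,l_k, m₁,…,m_k ∈ ℝ. Let w = (w₁,…,w_k) and z = (z₁,…,z_k) be C² functions on Ω satisfying, for each i, −l_i Δw_i = ∂H/∂s_i(w, z) and −m_i Δz_i = ∂H/∂t_i(w, z) on Ω, where ∂H/∂s_i and ∂H/∂t_i denote the partial derivatives of H(s,t) in its first and second group of variables. Then for every C¹ vector field Y : ℝᴺ → ℝᴺ with compact support contained in Ω one has ∑_{i=1}^k l_i ∫_Ω ( ⟨(DY)∇w_i, ∇w_i⟩ − ½ (div Y) |∇w_i|²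 ) dx + ∑_{i=1}^k m_i ∫_Ω ( ⟨(DY)∇z_i, ∇z_i⟩ − ½ (div Y) |∇z_i|² ) dx + ∫_Ω H(w(x), z(x)) (div Y)(x) dx = 0. -/
open MeasureTheory Metric
open scoped RealInnerProductSpace

/-- The Laplacian: sum of the pure second partial derivatives. -/
noncomputable def lap {N : ℕ} (f : EuclideanSpace ℝ (Fin N) → ℝ)
    (x : EuclideanSpace ℝ (Fin N)) : ℝ :=
  ∑ i : Fin N, fderiv ℝ (fun y => fderiv ℝ f y (EuclideanSpace.single i 1)) x
    (EuclideanSpace.single i 1)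

/-- The divergence of a vector field on `ℝᴺ`. -/
noncomputable def divg {N : ℕ} (Y : EuclideanSpace ℝ (Fin N) → EuclideanSpace ℝ (Fin N))
    (x : EuclideanSpace ℝ (Fin N)) : ℝ :=
  ∑ i : Fin N, fderiv ℝ (fun y => Y y i) x (EuclideanSpace.single i 1)

/-!
The integrand is, on `Ω`, the divergence of the vector field
`V = ∑ lᵢ Tʷⁱ + ∑ mᵢ Tᶻⁱ + H(w, z) Y`, where `Tᶠ = ⟨Y, ∇f⟩ ∇f - ½ |∇f|² Y`.
Indeed, by the symmetry of the Hessian, `div Tᶠ = ⟨(DY)∇f, ∇f⟩ - ½ (div Y) |∇f|² + ⟨Y, ∇f⟩ Δf`,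
while by the chain rule and the equations the derivative of `H(w, z)` along `Y` is
`-∑ lᵢ Δwᵢ ⟨∇wᵢ, Y⟩ - ∑ mᵢ Δzᵢ ⟨∇zᵢ, Y⟩`, which cancels the Laplacian terms.
Since `V` is `C¹` with compact support in `Ω`, its divergence integrates to zero.
-/

theorem ContDiffOn.contDiff_of_tsupport_subset {𝕜 E F : Type*} [NontriviallyNormedField 𝕜]
    [NormedAddCommGroup E] [NormedSpace 𝕜 E] [NormedAddCommGroup F] [NormedSpace 𝕜 F]
    {n : WithTop ℕ∞} {f : E → F} {s : Set E} (hf : ContDiffOn 𝕜 n f s) (hs : IsOpen s)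
    (hfs : tsupport f ⊆ s) : ContDiff 𝕜 n f := by
  refine contDiff_of_contDiffOn_union_of_isOpen hf (t := (tsupport f)ᶜ) ?_
    (Set.eq_univ_of_forall fun x => (em (x ∈ tsupport f)).imp (fun h => hfs h) id) hs
    (isClosed_tsupport f).isOpen_compl
  exact contDiffOn_const.congr fun x hx => image_eq_zero_of_notMem_tsupport hx

theorem ContinuousOn.integrable_of_support_subset {E F : Type*} [TopologicalSpace E] [T2Space E]
    [MeasurableSpace E] [OpensMeasurableSpace E] [NormedAddCommGroup F] {μ : Measure E}
    [IsFiniteMeasureOnCompacts μ] {f : E → F} {K : Set E} (hf : ContinuousOn f K)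
    (hK : IsCompact K) (hfK : Function.support f ⊆ K) : Integrable f μ :=
  (integrableOn_iff_integrable_of_support_subset hfK).1 (hf.integrableOn_compact hK)

section Divergence

variable {N : ℕ} {Y Z : EuclideanSpace ℝ (Fin N) → EuclideanSpace ℝ (Fin N)}
  {x : EuclideanSpace ℝ (Fin N)}

theorem fderiv_euclidean_apply (hY : DifferentiableAt ℝ Y x) (i : Fin N)
    (v : EuclideanSpace ℝ (Fin N)) :
    fderiv ℝ (fun y => Y y i) x v = fderiv ℝ Y x v i :=
  DFunLike.congr_fun ((EuclideanSpace.proj (𝕜 := ℝ) i).hasFDerivAt.comp x hY.hasFDerivAt).fderiv v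

theorem divg_eq_trace (hY : DifferentiableAt ℝ Y x) :
    divg Y x = LinearMap.trace ℝ (EuclideanSpace ℝ (Fin N)) (fderiv ℝ Y x).toLinearMap := by
  rw [LinearMap.trace_eq_sum_inner _ (EuclideanSpace.basisFun (Fin N) ℝ)]
  refine Finset.sum_congr rfl fun i _ => ?_
  simp [fderiv_euclidean_apply hY, EuclideanSpace.inner_single_left]

theorem divg_add (hY : DifferentiableAt ℝ Y x) (hZ : DifferentiableAt ℝ Z x) :
    divg (fun y => Y y + Z y) x = divg Y x + divg Z x := by
  rw [divg_eq_trace (hY.fun_add hZ), fderiv_fun_add hY hZ, divg_eq_trace hY, divg_eq_trace hZ,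
    ContinuousLinearMap.toLinearMap_add, map_add]

theorem divg_sub (hY : DifferentiableAt ℝ Y x) (hZ : DifferentiableAt ℝ Z x) :
    divg (fun y => Y y - Z y) x = divg Y x - divg Z x := by
  rw [divg_eq_trace (hY.fun_sub hZ), fderiv_fun_sub hY hZ, divg_eq_trace hY, divg_eq_trace hZ,
    ContinuousLinearMap.toLinearMap_sub, map_sub]

theorem divg_smul {c : EuclideanSpace ℝ (Fin N) → ℝ} (hc : DifferentiableAt ℝ c x)
    (hY : DifferentiableAt ℝ Y x) :
    divg (fun y => c y • Y y) x = fderiv ℝ c x (Y x) + c x * divg Y x := by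
  rw [divg_eq_trace (hc.fun_smul hY), fderiv_fun_smul hc hY, divg_eq_trace hY]
  simp [add_comm]

theorem divg_const_smul (c : ℝ) (hY : DifferentiableAt ℝ Y x) :
    divg (fun y => c • Y y) x = c * divg Y x := by
  simpa using divg_smul (differentiableAt_const c) hY

theorem divg_sum {ι : Type*} (s : Finset ι)
    {Y : ι → EuclideanSpace ℝ (Fin N) → EuclideanSpace ℝ (Fin N)}
    (hY : ∀ i ∈ s, DifferentiableAt ℝ (Y i) x) :
    divg (fun y => ∑ i ∈ s, Y i y) x = ∑ i ∈ s, divg (Y i) x := by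
  rw [divg_eq_trace (DifferentiableAt.fun_sum hY), fderiv_fun_sum hY]
  simp only [ContinuousLinearMap.toLinearMap_sum, map_sum]
  exact Finset.sum_congr rfl fun i hi => (divg_eq_trace (hY i hi)).symm

theorem divg_of_notMem_tsupport (hx : x ∉ tsupport Y) : divg Y x = 0 := by
  have hY : DifferentiableAt ℝ Y x :=
    (differentiableAt_const 0).congr_of_eventuallyEq (notMem_tsupport_iff_eventuallyEq.mp hx)
  rw [divg_eq_trace hY, fderiv_of_notMem_tsupport ℝ hx, ContinuousLinearMap.toLinearMap_zero,
    map_zero]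

theorem ContDiff.continuous_divg (hY : ContDiff ℝ 1 Y) : Continuous (divg Y) :=
  continuous_finsetSum _ fun i _ =>
    (((EuclideanSpace.proj (𝕜 := ℝ) i).contDiff.comp hY).continuous_fderiv one_ne_zero).clm_apply
      continuous_const

end Divergence

section IntegralOfDerivative

variable {E F : Type*} [NormedAddCommGroup E] [NormedSpace ℝ E] [MeasurableSpace E]
  [BorelSpace E] [NormedAddCommGroup F] [NormedSpace ℝ F] {μ : Measure E} {f : E → F}

theorem HasCompactSupport.integrable_fderiv_apply [IsFiniteMeasureOnCompacts μ]
    (hf : ContDiff ℝ 1 f) (hfc : HasCompactSupport f) (v : E) :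
    Integrable (fun x => fderiv ℝ f x v) μ :=
  ((hf.continuous_fderiv one_ne_zero).clm_apply continuous_const).integrable_of_hasCompactSupport
    (hfc.fderiv_apply (𝕜 := ℝ) v)

theorem HasCompactSupport.integral_fderiv_apply_eq_zero [FiniteDimensional ℝ E]
    [μ.IsAddHaarMeasure] (hf : ContDiff ℝ 1 f) (hfc : HasCompactSupport f) (v : E) :
    ∫ x, fderiv ℝ f x v ∂μ = 0 := by
  simpa using integral_smul_fderiv_eq_neg_fderiv_smul_of_integrable (μ := μ)
    (f := fun _ => (1 : ℝ)) (g := f) (v := v) (by simp)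
    (by simpa using hfc.integrable_fderiv_apply hf v)
    (by simpa using hf.continuous.integrable_of_hasCompactSupport hfc)
    (fun x _ => differentiableAt_const _) (fun x _ => hf.differentiable one_ne_zero x)

end IntegralOfDerivative

theorem HasCompactSupport.integral_divg_eq_zero {N : ℕ}
    {V : EuclideanSpace ℝ (Fin N) → EuclideanSpace ℝ (Fin N)} (hV : ContDiff ℝ 1 V)
    (hVc : HasCompactSupport V) : ∫ x, divg V x = 0 := by
  have hVi (i : Fin N) : ContDiff ℝ 1 fun y => V y i :=
    (EuclideanSpace.proj (𝕜 := ℝ) i).contDiff.comp hV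
  have hVci (i : Fin N) : HasCompactSupport fun y => V y i :=
    hVc.comp_left (g := EuclideanSpace.proj (𝕜 := ℝ) i) (map_zero _)
  unfold divg
  rw [integral_finsetSum _ fun i _ => (hVci i).integrable_fderiv_apply (hVi i) _]
  exact Finset.sum_eq_zero fun i _ => (hVci i).integral_fderiv_apply_eq_zero (hVi i) _

section Gradient

variable {E : Type*} [NormedAddCommGroup E] [InnerProductSpace ℝ E] [CompleteSpace E]
  {f : E → ℝ} {x : E}

theorem hasFDerivAt_gradient (hf : DifferentiableAt ℝ (fderiv ℝ f) x) :
    HasFDerivAt (gradient f)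
      ((InnerProductSpace.toDual ℝ E).symm.toContinuousLinearEquiv.toContinuousLinearMap.comp
        (fderiv ℝ (fderiv ℝ f) x)) x :=
  (InnerProductSpace.toDual ℝ E).symm.toContinuousLinearEquiv.hasFDerivAt.comp x hf.hasFDerivAt

theorem inner_fderiv_gradient (hf : DifferentiableAt ℝ (fderiv ℝ f) x) (u v : E) :
    ⟪fderiv ℝ (gradient f) x u, v⟫ = fderiv ℝ (fderiv ℝ f) x u v := by
  rw [(hasFDerivAt_gradient hf).fderiv]
  exact InnerProductSpace.toDual_symm_apply

theorem ContDiffAt.gradient {m n : WithTop ℕ∞} (hf : ContDiffAt ℝ n f x) (hmn : m + 1 ≤ n) :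
    ContDiffAt ℝ m (gradient f) x :=
  (InnerProductSpace.toDual ℝ E).symm.contDiff.contDiffAt.comp x (hf.fderiv_right hmn)

theorem inner_fderiv_gradient_comm (hf : ContDiffAt ℝ 2 f x) (u v : E) :
    ⟪fderiv ℝ (gradient f) x u, v⟫ = ⟪fderiv ℝ (gradient f) x v, u⟫ := by
  have hdf : DifferentiableAt ℝ (fderiv ℝ f) x :=
    (hf.fderiv_right (m := 1) le_rfl).differentiableAt one_ne_zero
  rw [inner_fderiv_gradient hdf, inner_fderiv_gradient hdf]
  exact hf.isSymmSndFDerivAt (by simp) u v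

end Gradient

theorem gradient_apply_single {N : ℕ} (f : EuclideanSpace ℝ (Fin N) → ℝ)
    (x : EuclideanSpace ℝ (Fin N)) (i : Fin N) :
    gradient f x i = fderiv ℝ f x (EuclideanSpace.single i 1) := by
  rw [← inner_gradient_left, EuclideanSpace.inner_single_right, one_mul, RCLike.conj_to_real]

theorem divg_gradient {N : ℕ} (f : EuclideanSpace ℝ (Fin N) → ℝ) : divg (gradient f) = lap f := by
  ext x
  simp only [divg, lap, gradient_apply_single]

noncomputable def stressField {E : Type*} [NormedAddCommGroup E] [InnerProductSpace ℝ E]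
    [CompleteSpace E] (Y : E → E) (f : E → ℝ) (y : E) : E :=
  ⟪Y y, gradient f y⟫ • gradient f y - (1 / 2 * ‖gradient f y‖ ^ 2) • Y y

noncomputable def dirichletVariation {N : ℕ}
    (Y : EuclideanSpace ℝ (Fin N) → EuclideanSpace ℝ (Fin N))
    (f : EuclideanSpace ℝ (Fin N) → ℝ) (x : EuclideanSpace ℝ (Fin N)) : ℝ :=
  ⟪fderiv ℝ Y x (gradient f x), gradient f x⟫ - 1 / 2 * divg Y x * ‖gradient f x‖ ^ 2

section StressField

variable {N : ℕ} {Y : EuclideanSpace ℝ (Fin N) → EuclideanSpace ℝ (Fin N)}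
  {f : EuclideanSpace ℝ (Fin N) → ℝ} {x : EuclideanSpace ℝ (Fin N)}

theorem divg_stressField (hY : DifferentiableAt ℝ Y x) (hf : ContDiffAt ℝ 2 f x) :
    divg (stressField Y f) x = dirichletVariation Y f x + ⟪Y x, gradient f x⟫ * lap f x := by
  have hg : DifferentiableAt ℝ (gradient f) x :=
    (hf.gradient (m := 1) le_rfl).differentiableAt one_ne_zero
  have hYg : DifferentiableAt ℝ (fun y => ⟪Y y, gradient f y⟫) x := hY.inner ℝ hg
  have hgg : HasFDerivAt (fun y => 1 / 2 * ‖gradient f y‖ ^ 2)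
      ((innerSL ℝ (gradient f x)).comp (fderiv ℝ (gradient f) x)) x := by
    refine (hg.hasFDerivAt.norm_sq.const_mul (1 / 2 : ℝ)).congr_fderiv ?_
    rw [two_smul, ← two_smul ℝ, smul_smul]
    norm_num
  unfold stressField dirichletVariation
  rw [divg_sub (hYg.fun_smul hg) (hgg.differentiableAt.fun_smul hY), divg_smul hYg hg,
    divg_smul hgg.differentiableAt hY, divg_gradient, hgg.fderiv, fderiv_inner_apply ℝ hY hg]
  simp only [ContinuousLinearMap.comp_apply, innerSL_apply_apply]
  rw [real_inner_comm _ (Y x), real_inner_comm _ (gradient f x), inner_fderiv_gradient_comm hf]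
  ring

theorem contDiffAt_stressField (hY : ContDiffAt ℝ 1 Y x) (hf : ContDiffAt ℝ 2 f x) :
    ContDiffAt ℝ 1 (stressField Y f) x := by
  have hg : ContDiffAt ℝ 1 (gradient f) x := hf.gradient le_rfl
  exact ((hY.inner ℝ hg).smul hg).sub ((contDiffAt_const.mul (hg.norm_sq ℝ)).smul hY)

theorem dirichletVariation_of_notMem_tsupport (hx : x ∉ tsupport Y) :
    dirichletVariation Y f x = 0 := by
  simp [dirichletVariation, fderiv_of_notMem_tsupport ℝ hx, divg_of_notMem_tsupport hx]

theorem continuousAt_dirichletVariation (hY : ContDiff ℝ 1 Y) (hf : ContDiffAt ℝ 2 f x) :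
    ContinuousAt (dirichletVariation Y f) x := by
  have hg : ContinuousAt (gradient f) x := (hf.gradient (m := 1) le_rfl).continuousAt
  exact (((hY.continuous_fderiv one_ne_zero).continuousAt.clm_apply hg).inner hg).sub
    ((continuousAt_const.mul (hY.continuous_divg.continuousAt)).mul (hg.norm.pow 2))

end StressField

section Integrability

variable {N : ℕ} {μ : Measure (EuclideanSpace ℝ (Fin N))} [IsFiniteMeasureOnCompacts μ]
  {Y : EuclideanSpace ℝ (Fin N) → EuclideanSpace ℝ (Fin N)}

theorem integrable_dirichletVariation {f : EuclideanSpace ℝ (Fin N) → ℝ} (hY : ContDiff ℝ 1 Y)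
    (hYc : HasCompactSupport Y) (hf : ∀ x ∈ tsupport Y, ContDiffAt ℝ 2 f x) :
    Integrable (dirichletVariation Y f) μ :=
  ContinuousOn.integrable_of_support_subset
    (fun x hx => (continuousAt_dirichletVariation hY (hf x hx)).continuousWithinAt) hYc
    (Function.support_subset_iff'.2 fun _ => dirichletVariation_of_notMem_tsupport)

theorem integrable_mul_divg {G : EuclideanSpace ℝ (Fin N) → ℝ} (hY : ContDiff ℝ 1 Y)
    (hYc : HasCompactSupport Y) (hG : ContinuousOn G (tsupport Y)) :
    Integrable (fun x => G x * divg Y x) μ :=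
  ContinuousOn.integrable_of_support_subset (hG.mul hY.continuous_divg.continuousOn) hYc
    (Function.support_subset_iff'.2 fun _ hx => by simp [divg_of_notMem_tsupport hx])

end Integrability

theorem integral_sum_mul_add_sum_mul_add {α ι : Type*} [Fintype ι] [MeasurableSpace α]
    {μ : Measure α} {a b : ι → α → ℝ} {c : α → ℝ} (l m : ι → ℝ)
    (ha : ∀ i, Integrable (a i) μ) (hb : ∀ i, Integrable (b i) μ) (hc : Integrable c μ) :
    ∫ x, (∑ i, l i * a i x + ∑ i, m i * b i x + c x) ∂μ
      = (∑ i, l i * ∫ x, a i x ∂μ) + (∑ i, m i * ∫ x, b i x ∂μ) + ∫ x, c x ∂μ := by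
  have hla : Integrable (fun x => ∑ i, l i * a i x) μ :=
    integrable_finsetSum _ fun i _ => (ha i).const_mul (l i)
  have hmb : Integrable (fun x => ∑ i, m i * b i x) μ :=
    integrable_finsetSum _ fun i _ => (hb i).const_mul (m i)
  have hlamb : Integrable (fun x => ∑ i, l i * a i x + ∑ i, m i * b i x) μ := hla.add hmb
  rw [integral_add hlamb hc, integral_add hla hmb,
    integral_finsetSum _ fun i _ => (ha i).const_mul (l i),
    integral_finsetSum _ fun i _ => (hb i).const_mul (m i)]
  simp only [integral_const_mul]

section EuclideanCoordinates

variable {ι : Type*} [Fintype ι]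

theorem ContinuousLinearMap.apply_eq_sum_single [DecidableEq ι]
    (φ : EuclideanSpace ℝ ι →L[ℝ] ℝ) (a : EuclideanSpace ℝ ι) :
    φ a = ∑ j, a j * φ (EuclideanSpace.single j 1) := by
  conv_lhs => rw [← (EuclideanSpace.basisFun ι ℝ).sum_repr a]
  simp

theorem ContinuousLinearMap.apply_prod_eq_sum_single [DecidableEq ι]
    (L : EuclideanSpace ℝ ι × EuclideanSpace ℝ ι →L[ℝ] ℝ) (a b : EuclideanSpace ℝ ι) :
    L (a, b) = ∑ j, a j * L (EuclideanSpace.single j 1, 0)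
      + ∑ j, b j * L (0, EuclideanSpace.single j 1) := by
  rw [← L.comp_inl_add_comp_inr, apply_eq_sum_single (L.comp _) a,
    apply_eq_sum_single (L.comp _) b]
  rfl

variable {E : Type*} [NormedAddCommGroup E] [NormedSpace ℝ E] {x : E}

theorem hasFDerivAt_toLp_pi {f : ι → E → ℝ} {f' : ι → E →L[ℝ] ℝ}
    (hf : ∀ j, HasFDerivAt (f j) (f' j) x) :
    HasFDerivAt (fun y => WithLp.toLp 2 fun j => f j y)
      ((EuclideanSpace.equiv ι ℝ).symm.toContinuousLinearMap.comp
        (ContinuousLinearMap.pi f')) x :=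
  (EuclideanSpace.equiv ι ℝ).symm.toContinuousLinearMap.hasFDerivAt.comp x (hasFDerivAt_pi.2 hf)

theorem fderiv_comp_toLp_prod_apply [DecidableEq ι]
    {H : EuclideanSpace ℝ ι × EuclideanSpace ℝ ι → ℝ} {w z : ι → E → ℝ}
    (hH : DifferentiableAt ℝ H (WithLp.toLp 2 (fun j => w j x), WithLp.toLp 2 (fun j => z j x)))
    (hw : ∀ j, DifferentiableAt ℝ (w j) x) (hz : ∀ j, DifferentiableAt ℝ (z j) x) (v : E) :
    fderiv ℝ (fun y => H (WithLp.toLp 2 (fun j => w j y), WithLp.toLp 2 (fun j => z j y))) x v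
      = ∑ j, fderiv ℝ (w j) x v * fderiv ℝ H
          (WithLp.toLp 2 (fun j => w j x), WithLp.toLp 2 (fun j => z j x))
          (EuclideanSpace.single j 1, 0)
        + ∑ j, fderiv ℝ (z j) x v * fderiv ℝ H
          (WithLp.toLp 2 (fun j => w j x), WithLp.toLp 2 (fun j => z j x))
          (0, EuclideanSpace.single j 1) := by
  refine (DFunLike.congr_fun (hH.hasFDerivAt.comp x
    ((hasFDerivAt_toLp_pi fun j => (hw j).hasFDerivAt).prodMk
      (hasFDerivAt_toLp_pi fun j => (hz j).hasFDerivAt))).fderiv v).trans ?_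
  exact ContinuousLinearMap.apply_prod_eq_sum_single _ _ _

end EuclideanCoordinates

noncomputable def pohozaevField {N : ℕ} {ι : Type*} [Fintype ι] (l m : ι → ℝ)
    (w z : ι → EuclideanSpace ℝ (Fin N) → ℝ) (G : EuclideanSpace ℝ (Fin N) → ℝ)
    (Y : EuclideanSpace ℝ (Fin N) → EuclideanSpace ℝ (Fin N)) (y : EuclideanSpace ℝ (Fin N)) :
    EuclideanSpace ℝ (Fin N) :=
  ∑ i, l i • stressField Y (w i) y + ∑ i, m i • stressField Y (z i) y + G y • Y y

section PohozaevField

variable {N : ℕ} {ι : Type*} [Fintype ι] {l m : ι → ℝ} {w z : ι → EuclideanSpace ℝ (Fin N) → ℝ}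
  {G : EuclideanSpace ℝ (Fin N) → ℝ} {Y : EuclideanSpace ℝ (Fin N) → EuclideanSpace ℝ (Fin N)}
  {x : EuclideanSpace ℝ (Fin N)}

theorem contDiffAt_pohozaevField (hY : ContDiffAt ℝ 1 Y x) (hw : ∀ i, ContDiffAt ℝ 2 (w i) x)
    (hz : ∀ i, ContDiffAt ℝ 2 (z i) x) (hG : ContDiffAt ℝ 1 G x) :
    ContDiffAt ℝ 1 (pohozaevField l m w z G Y) x :=
  ((ContDiffAt.sum fun i _ => (contDiffAt_stressField hY (hw i)).const_smul (l i)).add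
    (ContDiffAt.sum fun i _ => (contDiffAt_stressField hY (hz i)).const_smul (m i))).add
    (hG.smul hY)

theorem support_pohozaevField_subset :
    Function.support (pohozaevField l m w z G Y) ⊆ Function.support Y := by
  intro y hy hY
  simp [pohozaevField, stressField, hY] at hy

theorem divg_pohozaevField (hY : ContDiffAt ℝ 1 Y x) (hw : ∀ i, ContDiffAt ℝ 2 (w i) x)
    (hz : ∀ i, ContDiffAt ℝ 2 (z i) x) (hG : DifferentiableAt ℝ G x)
    (hGY : fderiv ℝ G x (Y x) = ∑ i, fderiv ℝ (w i) x (Y x) * (-l i * lap (w i) x)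
      + ∑ i, fderiv ℝ (z i) x (Y x) * (-m i * lap (z i) x)) :
    divg (pohozaevField l m w z G Y) x = ∑ i, l i * dirichletVariation Y (w i) x
      + ∑ i, m i * dirichletVariation Y (z i) x + G x * divg Y x := by
  have hYd : DifferentiableAt ℝ Y x := hY.differentiableAt one_ne_zero
  have hS {f} (c : ℝ) (hf : ContDiffAt ℝ 2 f x) :
      DifferentiableAt ℝ (fun y => c • stressField Y f y) x :=
    ((contDiffAt_stressField hY hf).differentiableAt one_ne_zero).const_smul c
  -- the `⟪Y, ∇f⟫ Δf` part of the divergence cancels against the derivative of `G`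
  have hcancel {f} (c : ℝ) (hf : ContDiffAt ℝ 2 f x) :
      c * dirichletVariation Y f x = divg (fun y => c • stressField Y f y) x
        + fderiv ℝ f x (Y x) * (-c * lap f x) := by
    rw [divg_const_smul c ((contDiffAt_stressField hY hf).differentiableAt one_ne_zero),
      divg_stressField hYd hf, real_inner_comm, inner_gradient_left]
    ring
  have hW := DifferentiableAt.fun_sum fun i (_ : i ∈ Finset.univ) => hS (l i) (hw i)
  have hZ := DifferentiableAt.fun_sum fun i (_ : i ∈ Finset.univ) => hS (m i) (hz i)
  unfold pohozaevField
  rw [divg_add (hW.fun_add hZ) (hG.fun_smul hYd), divg_add hW hZ,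
    divg_sum _ fun i _ => hS (l i) (hw i), divg_sum _ fun i _ => hS (m i) (hz i),
    divg_smul hG hYd, hGY]
  simp only [fun i => hcancel (l i) (hw i), fun i => hcancel (m i) (hz i), Finset.sum_add_distrib]
  ring

end PohozaevField

theorem setIntegral_pohozaev_eq_zero {N : ℕ} {ι : Type*} [Fintype ι] {l m : ι → ℝ}
    {w z : ι → EuclideanSpace ℝ (Fin N) → ℝ} {G : EuclideanSpace ℝ (Fin N) → ℝ}
    {Y : EuclideanSpace ℝ (Fin N) → EuclideanSpace ℝ (Fin N)} {Ω : Set (EuclideanSpace ℝ (Fin N))}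
    (hΩ : IsOpen Ω) (hY : ContDiff ℝ 1 Y) (hYc : HasCompactSupport Y) (hYs : tsupport Y ⊆ Ω)
    (hw : ∀ i, ContDiffOn ℝ 2 (w i) Ω) (hz : ∀ i, ContDiffOn ℝ 2 (z i) Ω)
    (hG : ContDiffOn ℝ 1 G Ω)
    (hGY : ∀ x ∈ Ω, fderiv ℝ G x (Y x) = ∑ i, fderiv ℝ (w i) x (Y x) * (-l i * lap (w i) x)
      + ∑ i, fderiv ℝ (z i) x (Y x) * (-m i * lap (z i) x)) :
    ∫ x in Ω, (∑ i, l i * dirichletVariation Y (w i) x + ∑ i, m i * dirichletVariation Y (z i) x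
      + G x * divg Y x) = 0 := by
  set V := pohozaevField l m w z G Y
  have hVx {x} (hx : x ∈ Ω) : ContDiffAt ℝ 1 V x :=
    contDiffAt_pohozaevField hY.contDiffAt (fun i => (hw i).contDiffAt (hΩ.mem_nhds hx))
      (fun i => (hz i).contDiffAt (hΩ.mem_nhds hx)) (hG.contDiffAt (hΩ.mem_nhds hx))
  have hVΩ : tsupport V ⊆ Ω := (closure_mono support_pohozaevField_subset).trans hYs
  calc _ = ∫ x in Ω, divg V x := setIntegral_congr_fun hΩ.measurableSet fun x hx =>
        (divg_pohozaevField hY.contDiffAt (fun i => (hw i).contDiffAt (hΩ.mem_nhds hx))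
          (fun i => (hz i).contDiffAt (hΩ.mem_nhds hx))
          ((hG.contDiffAt (hΩ.mem_nhds hx)).differentiableAt one_ne_zero) (hGY x hx)).symm
    _ = ∫ x, divg V x := setIntegral_eq_integral_of_forall_compl_eq_zero fun x hx =>
        divg_of_notMem_tsupport fun h => hx (hVΩ h)
    _ = 0 := (hYc.mono support_pohozaevField_subset).integral_divg_eq_zero
        (ContDiffOn.contDiff_of_tsupport_subset (fun x hx => (hVx hx).contDiffWithinAt) hΩ hVΩ)

theorem stmt3_general (N k : ℕ) (Ω : Set (EuclideanSpace ℝ (Fin N))) (hΩ : IsOpen Ω)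
    (H : EuclideanSpace ℝ (Fin k) × EuclideanSpace ℝ (Fin k) → ℝ) (hH : ContDiff ℝ 1 H)
    (l m : Fin k → ℝ)
    (w z : Fin k → EuclideanSpace ℝ (Fin N) → ℝ)
    (hw : ∀ i, ContDiffOn ℝ 2 (w i) Ω) (hz : ∀ i, ContDiffOn ℝ 2 (z i) Ω)
    (hpde1 : ∀ i, ∀ x ∈ Ω, -(l i) * lap (w i) x
      = fderiv ℝ H ((WithLp.toLp 2 (fun j => w j x)), (WithLp.toLp 2 (fun j => z j x))) (EuclideanSpace.single i 1, 0))
    (hpde2 : ∀ i, ∀ x ∈ Ω, -(m i) * lap (z i) x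
      = fderiv ℝ H ((WithLp.toLp 2 (fun j => w j x)), (WithLp.toLp 2 (fun j => z j x))) (0, EuclideanSpace.single i 1))
    (Y : EuclideanSpace ℝ (Fin N) → EuclideanSpace ℝ (Fin N))
    (hY : ContDiff ℝ 1 Y) (hYc : HasCompactSupport Y) (hYs : tsupport Y ⊆ Ω) :
    (∑ i, l i * ∫ x in Ω, (⟪fderiv ℝ Y x (gradient (w i) x), gradient (w i) x⟫
        - (1 / 2) * divg Y x * ‖gradient (w i) x‖ ^ 2))
      + (∑ i, m i * ∫ x in Ω, (⟪fderiv ℝ Y x (gradient (z i) x), gradient (z i) x⟫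
        - (1 / 2) * divg Y x * ‖gradient (z i) x‖ ^ 2))
      + (∫ x in Ω, H ((WithLp.toLp 2 (fun j => w j x)), (WithLp.toLp 2 (fun j => z j x))) * divg Y x) = 0 := by
  set G : EuclideanSpace ℝ (Fin N) → ℝ :=
    fun y => H (WithLp.toLp 2 (fun j => w j y), WithLp.toLp 2 (fun j => z j y))
  have hG : ContDiffOn ℝ 1 G Ω := hH.comp_contDiffOn
    ((contDiffOn_euclidean.2 fun j => (hw j).of_le one_le_two).prodMk
      (contDiffOn_euclidean.2 fun j => (hz j).of_le one_le_two))
  have hC2 {f : EuclideanSpace ℝ (Fin N) → ℝ} (hf : ContDiffOn ℝ 2 f Ω) :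
      ∀ x ∈ tsupport Y, ContDiffAt ℝ 2 f x := fun x hx => hf.contDiffAt (hΩ.mem_nhds (hYs hx))
  refine (integral_sum_mul_add_sum_mul_add l m
    (fun i => (integrable_dirichletVariation hY hYc (hC2 (hw i))).integrableOn)
    (fun i => (integrable_dirichletVariation hY hYc (hC2 (hz i))).integrableOn)
    (integrable_mul_divg hY hYc (hG.continuousOn.mono hYs)).integrableOn).symm.trans ?_
  refine setIntegral_pohozaev_eq_zero hΩ hY hYc hYs hw hz hG fun x hx => ?_
  have hdiff {f : EuclideanSpace ℝ (Fin N) → ℝ} (hf : ContDiffOn ℝ 2 f Ω) :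
      DifferentiableAt ℝ f x := (hf.differentiableOn two_ne_zero).differentiableAt (hΩ.mem_nhds hx)
  rw [fderiv_comp_toLp_prod_apply (hH.differentiable one_ne_zero _) (fun j => hdiff (hw j))
    (fun j => hdiff (hz j))]
  simp only [hpde1 _ x hx, hpde2 _ x hx]

/-- domain-variation identity for solutions of the Hamiltonian system
`−l_i Δw_i = ∂H/∂s_i(w,z)`, `−m_i Δz_i = ∂H/∂t_i(w,z)` on an open set `Ω ⊆ ℝᴺ`,
tested against a compactly supported `C¹` vector field `Y`. -/
theorem stmt3 (N k : ℕ) (hN : 2 ≤ N) (Ω : Set (EuclideanSpace ℝ (Fin N))) (hΩ : IsOpen Ω)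
    (H : EuclideanSpace ℝ (Fin k) × EuclideanSpace ℝ (Fin k) → ℝ) (hH : ContDiff ℝ 1 H)
    (l m : Fin k → ℝ)
    (w z : Fin k → EuclideanSpace ℝ (Fin N) → ℝ)
    (hw : ∀ i, ContDiffOn ℝ 2 (w i) Ω) (hz : ∀ i, ContDiffOn ℝ 2 (z i) Ω)
    (hpde1 : ∀ i, ∀ x ∈ Ω, -(l i) * lap (w i) x
      = fderiv ℝ H ((WithLp.toLp 2 (fun j => w j x)), (WithLp.toLp 2 (fun j => z j x))) (EuclideanSpace.single i 1, 0))
    (hpde2 : ∀ i, ∀ x ∈ Ω, -(m i) * lap (z i) x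
      = fderiv ℝ H ((WithLp.toLp 2 (fun j => w j x)), (WithLp.toLp 2 (fun j => z j x))) (0, EuclideanSpace.single i 1))
    (Y : EuclideanSpace ℝ (Fin N) → EuclideanSpace ℝ (Fin N))
    (hY : ContDiff ℝ 1 Y) (hYc : HasCompactSupport Y) (hYs : tsupport Y ⊆ Ω) :
    (∑ i, l i * ∫ x in Ω, (⟪fderiv ℝ Y x (gradient (w i) x), gradient (w i) x⟫
        - (1 / 2) * divg Y x * ‖gradient (w i) x‖ ^ 2))
      + (∑ i, m i * ∫ x in Ω, (⟪fderiv ℝ Y x (gradient (z i) x), gradient (z i) x⟫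
        - (1 / 2) * divg Y x * ‖gradient (z i) x‖ ^ 2))
      + (∫ x in Ω, H ((WithLp.toLp 2 (fun j => w j x)), (WithLp.toLp 2 (fun j => z j x))) * divg Y x) = 0 :=
  stmt3_general N k Ω hΩ H hH l m w z hw hz hpde1 hpde2 Y hY hYc hYs
end

section
/- Let N ∈ ℕ with N ≥ 2 and a > 0. Then there exist constants C > 0 and ε̄ > 0 such that for every 0 < ε < ε̄, every unit vector ν ∈ ℝᴺ, and every function w that is continuous and nonnegative on the closed unit ball of ℝᴺ, C² on the open unit ball B₁(0), satisfies −Δw ≤ a·w pointwise on B₁(0), and vanishes identically on { x ∈ B₁(0) : |x·ν| > ε }, one has sup_{B_{1/2}(0)} w ≤ e^{−C/ε} · sup_{B₁(0)} w. -/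
/-!
Compare `w` with the barrier `v(y) = cos(l⟪y, ν⟫) exp(m‖y‖²)`, `l = π/(3ε)`, `m = π/(12ε)`.
On the strip `|⟪y, ν⟫| ≤ 3ε/2` inside the unit ball, `-Δv ≥ (π²/(12ε²) - πN/(6ε)) v`, which
exceeds `a v` once `ε` is small; so no multiple `κ v ≥ w` can touch `w` at an interior point where
`w > 0`, and the largest ratio `w/v` over the closed strip `|⟪y, ν⟫| ≤ ε` is reached on the
sphere, where `v ≥ eᵐ/2`. Hence `w ≤ 2 e⁻ᵐ sup w · v`, and on the half ball `v ≤ e^{m/4}`,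
giving the factor `2 e^{-π/(16ε)} ≤ e^{-π/(32ε)}`.
-/

open MeasureTheory Metric
open scoped RealInnerProductSpace

open Filter Topology Real

theorem IsLocalMax.deriv_deriv_nonpos {f : ℝ → ℝ} {x : ℝ} (h : IsLocalMax f x)
    (hc : ContinuousAt f x) : deriv (deriv f) x ≤ 0 := by
  by_contra! hpos
  have hconst : f =ᶠ[𝓝 x] fun _ => f x :=
    (h.and (isLocalMin_of_deriv_deriv_pos hpos h.deriv_eq_zero hc)).mono
      fun y hy => le_antisymm hy.1 hy.2
  have hderiv : deriv f =ᶠ[𝓝 x] fun _ => 0 :=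
    hconst.eventually_nhds.mono fun y (hy : f =ᶠ[𝓝 y] fun _ => f x) => by
      simpa using hy.deriv_eq
  simp [hderiv.deriv_eq] at hpos

section Line
variable {E : Type*} [NormedAddCommGroup E] [NormedSpace ℝ E] {f : E → ℝ} {x : E}

theorem fderiv_fderiv_apply_eq_deriv_deriv_line (hf : ContDiffAt ℝ 2 f x) (e : E) :
    fderiv ℝ (fun y => fderiv ℝ f y e) x e = deriv (deriv fun s : ℝ => f (x + s • e)) 0 := by
  have hline : ∀ s : ℝ, HasDerivAt (fun s : ℝ => x + s • e) e s := fun s => by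
    simpa using ((hasDerivAt_id s).smul_const e).const_add x
  have hfd : ContDiffAt ℝ 1 (fderiv ℝ f) x := hf.fderiv_right (by norm_num)
  have hnear : ∀ᶠ s : ℝ in 𝓝 0, DifferentiableAt ℝ f (x + s • e) := by
    have : ∀ᶠ y in 𝓝 x, DifferentiableAt ℝ f y :=
      (hf.eventually (by simp)).mono fun y hy => hy.differentiableAt (by norm_num)
    refine ((hline 0).continuousAt.tendsto.eventually ?_)
    simpa using this
  have hfirst : deriv (fun s : ℝ => f (x + s • e)) =ᶠ[𝓝 0] fun s => fderiv ℝ f (x + s • e) e :=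
    hnear.mono fun s hs => (hs.hasFDerivAt.comp_hasDerivAt s (hline s)).deriv
  have hD := (hfd.differentiableAt one_ne_zero).hasFDerivAt
  have hsecond :
      HasDerivAt (fun s : ℝ => fderiv ℝ f (x + s • e) e) (fderiv ℝ (fderiv ℝ f) x e e) 0 :=
    (ContinuousLinearMap.apply ℝ ℝ e).hasFDerivAt.comp_hasDerivAt 0
      ((by simpa using hD : HasFDerivAt (fderiv ℝ f) _ (x + (0:ℝ) • e)).comp_hasDerivAt 0 (hline 0))
  have hcomp : HasFDerivAt (fun y => fderiv ℝ f y e)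
      ((ContinuousLinearMap.apply ℝ ℝ e).comp (fderiv ℝ (fderiv ℝ f) x)) x :=
    (ContinuousLinearMap.apply ℝ ℝ e).hasFDerivAt.comp x hD
  rw [hfirst.deriv_eq, hsecond.deriv, hcomp.fderiv]
  rfl

end Line

section Laplacian
variable {N : ℕ} {f g : EuclideanSpace ℝ (Fin N) → ℝ} {x : EuclideanSpace ℝ (Fin N)}

theorem lap_nonpos_of_isLocalMax (hf : ContDiffAt ℝ 2 f x) (h : IsLocalMax f x) : lap f x ≤ 0 := by
  refine Finset.sum_nonpos fun i _ => ?_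
  rw [fderiv_fderiv_apply_eq_deriv_deriv_line hf]
  have hline : Continuous fun s : ℝ => x + s • EuclideanSpace.single i (1 : ℝ) := by fun_prop
  refine IsLocalMax.deriv_deriv_nonpos ?_ (hf.continuousAt.comp_of_eq hline.continuousAt (by simp))
  exact IsLocalMax.comp_continuous (g := fun s : ℝ => x + s • EuclideanSpace.single i (1 : ℝ))
    (by simpa using h) hline.continuousAt

theorem lap_sub (hf : ContDiffAt ℝ 2 f x) (hg : ContDiffAt ℝ 2 g x) :
    lap (f - g) x = lap f x - lap g x := by
  rw [lap, lap, lap, ← Finset.sum_sub_distrib]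
  refine Finset.sum_congr rfl fun i _ => ?_
  set e := EuclideanSpace.single i (1 : ℝ)
  have hdiff : ∀ {h : EuclideanSpace ℝ (Fin N) → ℝ}, ContDiffAt ℝ 2 h x →
      DifferentiableAt ℝ (fun y => fderiv ℝ h y e) x := fun hh =>
    ((hh.fderiv_right (m := 1) (by norm_num)).differentiableAt one_ne_zero).clm_apply
      (differentiableAt_const e)
  have hnear : (fun y => fderiv ℝ (f - g) y e) =ᶠ[𝓝 x] fun y => fderiv ℝ f y e - fderiv ℝ g y e :=
    ((hf.eventually (by simp)).and (hg.eventually (by simp))).mono fun y hy => by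
      change fderiv ℝ (f - g) y e = _
      rw [fderiv_sub (hy.1.differentiableAt two_ne_zero) (hy.2.differentiableAt two_ne_zero)]
      rfl
  rw [hnear.fderiv_eq, fderiv_fun_sub (hdiff hf) (hdiff hg)]
  rfl

theorem lap_const_mul (c : ℝ) (f : EuclideanSpace ℝ (Fin N) → ℝ) (x : EuclideanSpace ℝ (Fin N)) :
    lap (fun y => c * f y) x = c * lap f x := by
  have h : ∀ e, (fun y => fderiv ℝ (fun y => c * f y) y e) = c • fun y => fderiv ℝ f y e := by
    intro e
    ext y
    rw [show (fun y => c * f y) = c • f from rfl, fderiv_const_smul_field]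
    rfl
  simp only [lap, h, fderiv_const_smul_field, Finset.mul_sum]
  rfl

theorem nonpos_of_isLocalMax_sub {a b : ℝ} (hf : ContDiffAt ℝ 2 f x) (hg : ContDiffAt ℝ 2 g x)
    (hmax : IsLocalMax (f - g) x) (hfg : f x = g x) (hf_sub : -lap f x ≤ a * f x)
    (hg_super : b * g x ≤ -lap g x) (hab : a < b) : f x ≤ 0 := by
  have hlap : lap (f - g) x ≤ 0 := lap_nonpos_of_isLocalMax (hf.sub hg) hmax
  rw [lap_sub hf hg] at hlap
  have : (b - a) * f x ≤ 0 := by rw [hfg] at hf_sub ⊢; linarith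
  exact nonpos_of_mul_nonpos_right this (sub_pos.2 hab)

end Laplacian

theorem deriv_deriv_cos_mul_exp (A B C D m : ℝ) :
    deriv (deriv fun s : ℝ => cos (A + B * s) * exp (C + D * s + m * s ^ 2)) 0
      = (-(B ^ 2) * cos A - 2 * B * D * sin A + (D ^ 2 + 2 * m) * cos A) * exp C := by
  have hlin : ∀ (u v s : ℝ), HasDerivAt (fun s : ℝ => u + v * s) v s := fun u v s => by
    simpa using ((hasDerivAt_id s).const_mul v).const_add u
  have hquad : ∀ s : ℝ, HasDerivAt (fun s : ℝ => C + D * s + m * s ^ 2) (D + 2 * m * s) s :=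
    fun s => ((hlin C D s).fun_add ((hasDerivAt_pow 2 s).const_mul m)).congr_deriv (by ring)
  have h1 : deriv (fun s : ℝ => cos (A + B * s) * exp (C + D * s + m * s ^ 2)) = fun s =>
      (-(B * sin (A + B * s)) + cos (A + B * s) * (D + 2 * m * s))
        * exp (C + D * s + m * s ^ 2) := by
    ext s
    refine ((hlin A B s).cos.fun_mul (hquad s).exp).deriv.trans ?_
    ring
  rw [h1]
  refine ((((hlin A B 0).sin.const_mul B).fun_neg.fun_add
    ((hlin A B 0).cos.fun_mul (hlin D (2 * m) 0))).fun_mul (hquad 0).exp).deriv.trans ?_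
  simp
  ring

theorem mul_sin_nonneg_of_abs_le_pi {t : ℝ} (ht : |t| ≤ π) : 0 ≤ t * sin t := by
  rcases le_total 0 t with h | h
  · exact mul_nonneg h (sin_nonneg_of_nonneg_of_le_pi h (le_of_abs_le ht))
  · exact mul_nonneg_of_nonpos_of_nonpos h
      (sin_nonpos_of_nonpos_of_neg_pi_le h (neg_le_of_abs_le ht))

theorem cos_nonneg_of_abs_le {t : ℝ} (ht : |t| ≤ π / 2) : 0 ≤ cos t :=
  cos_nonneg_of_neg_pi_div_two_le_of_le (neg_le_of_abs_le ht) (le_of_abs_le ht)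

section Barrier
variable {N : ℕ} (ν : EuclideanSpace ℝ (Fin N)) (l m : ℝ)

noncomputable def barrier (y : EuclideanSpace ℝ (Fin N)) : ℝ :=
  cos (l * ⟪y, ν⟫) * exp (m * ‖y‖ ^ 2)

theorem contDiff_barrier : ContDiff ℝ 2 (barrier ν l m) := by
  have hinner : ContDiff ℝ 2 fun y : EuclideanSpace ℝ (Fin N) => ⟪y, ν⟫ :=
    contDiff_id.inner ℝ contDiff_const
  have hnorm : ContDiff ℝ 2 fun y : EuclideanSpace ℝ (Fin N) => ‖y‖ ^ 2 :=
    contDiff_norm_sq ℝ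
  unfold barrier
  fun_prop

theorem lap_barrier (x : EuclideanSpace ℝ (Fin N)) :
    lap (barrier ν l m) x = exp (m * ‖x‖ ^ 2) *
      ((4 * m ^ 2 * ‖x‖ ^ 2 + 2 * m * N - l ^ 2 * ‖ν‖ ^ 2) * cos (l * ⟪x, ν⟫)
        - 4 * l * m * ⟪x, ν⟫ * sin (l * ⟪x, ν⟫)) := by
  have hline : ∀ i, (fun s : ℝ => barrier ν l m (x + s • EuclideanSpace.single i 1)) =
      fun s => cos (l * ⟪x, ν⟫ + l * ν i * s)
        * exp (m * ‖x‖ ^ 2 + 2 * m * x i * s + m * s ^ 2) := by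
    intro i
    ext s
    simp [barrier, inner_add_left, real_inner_smul_left, norm_add_sq_real, norm_smul,
      real_inner_smul_right, EuclideanSpace.inner_single_left, EuclideanSpace.inner_single_right]
    ring_nf
  have hsum : ∀ y z : EuclideanSpace ℝ (Fin N), ⟪y, z⟫ = ∑ i, y i * z i := fun y z => by
    simp [PiLp.inner_apply, mul_comm]
  simp only [lap, fderiv_fderiv_apply_eq_deriv_deriv_line ((contDiff_barrier ν l m).contDiffAt),
    hline, deriv_deriv_cos_mul_exp]
  generalize cos (l * ⟪x, ν⟫) = c
  generalize sin (l * ⟪x, ν⟫) = d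
  generalize exp (m * ‖x‖ ^ 2) = E
  rw [← real_inner_self_eq_norm_sq, ← real_inner_self_eq_norm_sq, hsum x x, hsum ν ν, hsum x ν,
    show (2 * m * N : ℝ) = ∑ _i : Fin N, 2 * m by simp; ring]
  simp only [Finset.mul_sum, Finset.sum_mul, ← Finset.sum_sub_distrib, ← Finset.sum_add_distrib]
  exact Finset.sum_congr rfl fun i _ => by ring

theorem barrier_nonneg {y : EuclideanSpace ℝ (Fin N)} (hly : |l * ⟪y, ν⟫| ≤ π / 2) :
    0 ≤ barrier ν l m y :=
  mul_nonneg (cos_nonneg_of_abs_le hly) (exp_pos _).le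

theorem barrier_le_exp (y : EuclideanSpace ℝ (Fin N)) :
    barrier ν l m y ≤ exp (m * ‖y‖ ^ 2) :=
  mul_le_of_le_one_left (exp_pos _).le (cos_le_one _)

theorem mul_barrier_le_neg_lap_barrier (hν : ‖ν‖ = 1) (hm : 0 ≤ m) {y : EuclideanSpace ℝ (Fin N)}
    (hy : ‖y‖ ≤ 1) (hly : |l * ⟪y, ν⟫| ≤ π / 2) :
    (l ^ 2 - 4 * m ^ 2 - 2 * m * N) * barrier ν l m y ≤ -lap (barrier ν l m) y := by
  have hcos : 0 ≤ cos (l * ⟪y, ν⟫) := cos_nonneg_of_abs_le hly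
  have hsin : 0 ≤ l * ⟪y, ν⟫ * sin (l * ⟪y, ν⟫) :=
    mul_sin_nonneg_of_abs_le_pi (hly.trans (by linarith [pi_pos]))
  have hy2 : m ^ 2 * ‖y‖ ^ 2 ≤ m ^ 2 := by
    nlinarith [pow_le_one₀ (n := 2) (norm_nonneg y) hy, sq_nonneg m]
  have hexp := exp_pos (m * ‖y‖ ^ 2)
  rw [lap_barrier, hν, barrier]
  nlinarith [mul_nonneg (mul_nonneg hexp.le hcos) (sub_nonneg.2 hy2),
    mul_nonneg (mul_nonneg hexp.le hm) hsin]

end Barrier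

theorem le_csSup_image_of_mem_closure {α : Type*} [TopologicalSpace α] {f : α → ℝ} {s : Set α}
    (hf : ContinuousOn f (closure s)) (hbdd : BddAbove (f '' s)) {x : α} (hx : x ∈ closure s) :
    f x ≤ sSup (f '' s) :=
  closure_minimal (fun _ hy => le_csSup hbdd hy) isClosed_Iic (hf.image_closure ⟨x, hx, rfl⟩)

theorem exists_forall_le_div_mul_of_isCompact {α : Type*} [TopologicalSpace α] {f g : α → ℝ}
    {K : Set α} (hK : IsCompact K) (hne : K.Nonempty) (hf : ContinuousOn f K)
    (hg : ContinuousOn g K) (hpos : ∀ x ∈ K, 0 < g x) :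
    ∃ x₀ ∈ K, ∀ x ∈ K, f x ≤ f x₀ / g x₀ * g x := by
  obtain ⟨x₀, hx₀, hmax⟩ := hK.exists_isMaxOn hne (hf.div hg fun x hx => (hpos x hx).ne')
  exact ⟨x₀, hx₀, fun x hx => (div_le_iff₀ (hpos x hx)).1 (hmax hx)⟩

section Decay

variable {N : ℕ} {ν : EuclideanSpace ℝ (Fin N)} {ε a : ℝ} {w : EuclideanSpace ℝ (Fin N) → ℝ}

theorem abs_pi_div_three_mul_le {θ c : ℝ} (hε : 0 < ε) (hθ : |θ| ≤ c * ε) :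
    |π / (3 * ε) * θ| ≤ c * π / 3 := by
  rw [abs_mul, abs_of_pos (by positivity)]
  calc π / (3 * ε) * |θ| ≤ π / (3 * ε) * (c * ε) := by gcongr
    _ = c * π / 3 := by field_simp

theorem half_exp_le_barrier (m : ℝ) (hε : 0 < ε) {y : EuclideanSpace ℝ (Fin N)}
    (hy : |⟪y, ν⟫| ≤ ε) : exp (m * ‖y‖ ^ 2) / 2 ≤ barrier ν (π / (3 * ε)) m y := by
  have hcos : cos (π / 3) ≤ cos |π / (3 * ε) * ⟪y, ν⟫| :=
    cos_le_cos_of_nonneg_of_le_pi (abs_nonneg _) (by linarith [pi_pos])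
      (by simpa using abs_pi_div_three_mul_le (c := 1) hε (by simpa using hy))
  rw [cos_abs, cos_pi_div_three] at hcos
  rw [barrier]
  nlinarith [exp_pos (m * ‖y‖ ^ 2)]

theorem isLocalMax_sub_mul_barrier {m κ : ℝ} (hε : 0 < ε) (hκ : 0 ≤ κ)
    (hle : ∀ x ∈ closedBall 0 1, |⟪x, ν⟫| ≤ ε → w x ≤ κ * barrier ν (π / (3 * ε)) m x)
    (hvan : ∀ x ∈ ball 0 1, ε < |⟪x, ν⟫| → w x = 0) {x₀ : EuclideanSpace ℝ (Fin N)}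
    (hx₀ : x₀ ∈ ball 0 1) (hx₀ν : |⟪x₀, ν⟫| ≤ ε) (heq : w x₀ = κ * barrier ν (π / (3 * ε)) m x₀) :
    IsLocalMax (w - fun y => κ * barrier ν (π / (3 * ε)) m y) x₀ := by
  have hU : ball 0 1 ∩ {x | |⟪x, ν⟫| < 3 / 2 * ε} ∈ 𝓝 x₀ :=
    (isOpen_ball.inter (isOpen_lt (by fun_prop) continuous_const)).mem_nhds
      ⟨hx₀, show |⟪x₀, ν⟫| < 3 / 2 * ε by linarith⟩
  filter_upwards [hU] with x ⟨hx, hxν⟩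
  simp only [Pi.sub_apply, heq, sub_self, sub_nonpos]
  rcases le_or_gt |⟪x, ν⟫| ε with h | h
  · exact hle x (ball_subset_closedBall hx) h
  · rw [hvan x hx h]
    have hxν' : |⟪x, ν⟫| ≤ 3 / 2 * ε := (show |⟪x, ν⟫| < 3 / 2 * ε from hxν).le
    exact mul_nonneg hκ
      (barrier_nonneg _ _ _ ((abs_pi_div_three_mul_le hε hxν').trans_eq (by ring)))

theorem nonpos_of_le_mul_barrier {κ : ℝ} (hε : 0 < ε) (hν : ‖ν‖ = 1)
    (ha : a < (π / (3 * ε)) ^ 2 - 4 * (π / (12 * ε)) ^ 2 - 2 * (π / (12 * ε)) * N)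
    (hw2 : ContDiffOn ℝ 2 w (ball 0 1)) (hsub : ∀ x ∈ ball 0 1, -lap w x ≤ a * w x)
    (hvan : ∀ x ∈ ball 0 1, ε < |⟪x, ν⟫| → w x = 0) (hκ : 0 ≤ κ)
    (hle : ∀ x ∈ closedBall 0 1, |⟪x, ν⟫| ≤ ε →
      w x ≤ κ * barrier ν (π / (3 * ε)) (π / (12 * ε)) x)
    {x₀ : EuclideanSpace ℝ (Fin N)} (hx₀ : x₀ ∈ ball 0 1) (hx₀ν : |⟪x₀, ν⟫| ≤ ε)
    (heq : w x₀ = κ * barrier ν (π / (3 * ε)) (π / (12 * ε)) x₀) : w x₀ ≤ 0 := by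
  set m := π / (12 * ε)
  set v := barrier ν (π / (3 * ε)) m
  have hsuper : ((π / (3 * ε)) ^ 2 - 4 * m ^ 2 - 2 * m * N) * (κ * v x₀)
      ≤ -lap (fun y => κ * v y) x₀ := by
    have hπ2 : |π / (3 * ε) * ⟪x₀, ν⟫| ≤ π / 2 :=
      (abs_pi_div_three_mul_le (c := 1) hε (by simpa using hx₀ν)).trans (by linarith [pi_pos])
    have := mul_barrier_le_neg_lap_barrier ν _ m hν (by positivity)
      (mem_closedBall_zero_iff.1 (ball_subset_closedBall hx₀)) hπ2
    rw [lap_const_mul]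
    nlinarith [mul_le_mul_of_nonneg_left this hκ]
  exact nonpos_of_isLocalMax_sub (hw2.contDiffAt (isOpen_ball.mem_nhds hx₀))
    (contDiff_const.mul (contDiff_barrier ν _ m)).contDiffAt
    (isLocalMax_sub_mul_barrier hε hκ hle hvan hx₀ hx₀ν heq) heq (hsub x₀ hx₀) hsuper ha

theorem le_two_mul_exp_mul_barrier (hε : 0 < ε) (hν : ‖ν‖ = 1)
    (ha : a < (π / (3 * ε)) ^ 2 - 4 * (π / (12 * ε)) ^ 2 - 2 * (π / (12 * ε)) * N)
    (hwc : ContinuousOn w (closedBall 0 1)) (hw0 : ∀ x ∈ closedBall 0 1, 0 ≤ w x)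
    (hw2 : ContDiffOn ℝ 2 w (ball 0 1)) (hsub : ∀ x ∈ ball 0 1, -lap w x ≤ a * w x)
    (hvan : ∀ x ∈ ball 0 1, ε < |⟪x, ν⟫| → w x = 0) {x : EuclideanSpace ℝ (Fin N)}
    (hx : x ∈ closedBall 0 1) (hxν : |⟪x, ν⟫| ≤ ε) :
    w x ≤ 2 * sSup (w '' ball 0 1) * exp (-(π / (12 * ε)))
      * barrier ν (π / (3 * ε)) (π / (12 * ε)) x := by
  set m := π / (12 * ε)
  set v := barrier ν (π / (3 * ε)) m
  set M := sSup (w '' ball 0 1)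
  have hcl : closure (ball (0 : EuclideanSpace ℝ (Fin N)) 1) = closedBall 0 1 :=
    closure_ball 0 one_ne_zero
  have hbdd : BddAbove (w '' ball 0 1) :=
    ((isCompact_closedBall 0 1).bddAbove_image hwc).mono (Set.image_mono ball_subset_closedBall)
  have hM : ∀ y ∈ closedBall 0 1, w y ≤ M := fun y hy =>
    le_csSup_image_of_mem_closure (hcl ▸ hwc) hbdd (hcl ▸ hy)
  have hvpos : ∀ y ∈ closedBall 0 1 ∩ {y | |⟪y, ν⟫| ≤ ε}, 0 < v y := fun y hy =>
    lt_of_lt_of_le (by positivity) (half_exp_le_barrier m hε hy.2)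
  have hK : IsCompact (closedBall (0 : EuclideanSpace ℝ (Fin N)) 1 ∩ {y | |⟪y, ν⟫| ≤ ε}) :=
    (isCompact_closedBall 0 1).inter_right (isClosed_le (by fun_prop) continuous_const)
  obtain ⟨x₀, ⟨hx₀, hx₀ν⟩, hmax⟩ := exists_forall_le_div_mul_of_isCompact hK
    ⟨0, by simp, by simpa using hε.le⟩ (hwc.mono Set.inter_subset_left)
    (contDiff_barrier ν _ m).continuous.continuousOn hvpos
  have hv₀ := hvpos x₀ ⟨hx₀, hx₀ν⟩
  suffices hκ : w x₀ / v x₀ ≤ 2 * M * exp (-m) from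
    (hmax x ⟨hx, hxν⟩).trans (mul_le_mul_of_nonneg_right hκ (hvpos x ⟨hx, hxν⟩).le)
  have hM0 : 0 ≤ M := (hw0 0 (by simp)).trans (hM 0 (by simp))
  rcases (mem_closedBall_zero_iff.1 hx₀).lt_or_eq with hlt | hsphere
  · have hw : w x₀ ≤ 0 :=
      nonpos_of_le_mul_barrier hε hν ha hw2 hsub hvan (div_nonneg (hw0 x₀ hx₀) hv₀.le)
        (fun y hy hyν => hmax y ⟨hy, hyν⟩) (mem_ball_zero_iff.2 hlt) hx₀ν
        (div_mul_cancel₀ _ hv₀.ne').symm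
    calc w x₀ / v x₀ ≤ 0 := div_nonpos_of_nonpos_of_nonneg hw hv₀.le
      _ ≤ 2 * M * exp (-m) := by positivity
  · have hv := half_exp_le_barrier m hε hx₀ν
    rw [hsphere, one_pow, mul_one] at hv
    rw [div_le_iff₀ hv₀]
    calc w x₀ ≤ M := hM x₀ hx₀
      _ = 2 * M * exp (-m) * (exp m / 2) := by rw [exp_neg]; field_simp
      _ ≤ 2 * M * exp (-m) * v x₀ := by gcongr

theorem sSup_image_ball_half_le (hε : 0 < ε) (hν : ‖ν‖ = 1)
    (ha : a < (π / (3 * ε)) ^ 2 - 4 * (π / (12 * ε)) ^ 2 - 2 * (π / (12 * ε)) * N)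
    (hwc : ContinuousOn w (closedBall 0 1)) (hw0 : ∀ x ∈ closedBall 0 1, 0 ≤ w x)
    (hw2 : ContDiffOn ℝ 2 w (ball 0 1)) (hsub : ∀ x ∈ ball 0 1, -lap w x ≤ a * w x)
    (hvan : ∀ x ∈ ball 0 1, ε < |⟪x, ν⟫| → w x = 0) :
    sSup (w '' ball 0 (1 / 2)) ≤ 2 * exp (-(π / (16 * ε))) * sSup (w '' ball 0 1) := by
  set m := π / (12 * ε)
  have hM0 : 0 ≤ sSup (w '' ball 0 1) :=
    Real.sSup_nonneg (Set.forall_mem_image.2 fun x hx => hw0 x (ball_subset_closedBall hx))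
  refine csSup_le ((nonempty_ball.2 (by norm_num)).image w) (Set.forall_mem_image.2 fun x hx => ?_)
  have hx1 : ‖x‖ < 1 / 2 := mem_ball_zero_iff.1 hx
  rcases le_or_gt |⟪x, ν⟫| ε with hxν | hxν
  · calc w x ≤ 2 * sSup (w '' ball 0 1) * exp (-m) * barrier ν (π / (3 * ε)) m x :=
          le_two_mul_exp_mul_barrier hε hν ha hwc hw0 hw2 hsub hvan
            (mem_closedBall_zero_iff.2 (by linarith)) hxν
      _ ≤ 2 * sSup (w '' ball 0 1) * exp (-m) * exp (m * (1 / 2) ^ 2) := by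
          gcongr
          exact (barrier_le_exp _ _ _ x).trans (exp_le_exp.2 (by gcongr))
      _ = 2 * exp (-(π / (16 * ε))) * sSup (w '' ball 0 1) := by
          rw [mul_assoc _ (exp _), ← exp_add, show -m + m * (1 / 2) ^ 2 = -(π / (16 * ε)) by ring]
          ring
  · rw [hvan x (ball_subset_ball (by norm_num) hx) hxν]
    positivity

end Decay

theorem eventually_lt_barrier_rate_and_two_mul_exp_le (a : ℝ) (N : ℕ) :
    ∀ᶠ ε in 𝓝[>] (0 : ℝ),
      a < (π / (3 * ε)) ^ 2 - 4 * (π / (12 * ε)) ^ 2 - 2 * (π / (12 * ε)) * N ∧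
        2 * exp (-(π / (16 * ε))) ≤ exp (-(π / 32) / ε) := by
  have hrate : ∀ᶠ ε in 𝓝 (0 : ℝ), a * ε ^ 2 + π * N * ε / 6 < π ^ 2 / 12 :=
    ContinuousAt.eventually_lt (by fun_prop) continuousAt_const (by simp; positivity)
  have hlog : ∀ᶠ ε in 𝓝 (0 : ℝ), 32 * log 2 * ε < π :=
    ContinuousAt.eventually_lt (by fun_prop) continuousAt_const (by simpa using pi_pos)
  filter_upwards [self_mem_nhdsWithin, nhdsWithin_le_nhds hrate, nhdsWithin_le_nhds hlog]
    with ε (hε : 0 < ε) hrate hlog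
  constructor
  · rw [show (π / (3 * ε)) ^ 2 - 4 * (π / (12 * ε)) ^ 2 - 2 * (π / (12 * ε)) * N
        = (π ^ 2 / 12 - π * N * ε / 6) / ε ^ 2 by field_simp; ring, lt_div_iff₀ (by positivity)]
    linarith
  · have h2 : log 2 ≤ π / (32 * ε) := by rw [le_div_iff₀ (by positivity)]; linarith
    rw [← exp_log two_pos, ← exp_add, exp_le_exp]
    have : π / (16 * ε) = 2 * (π / (32 * ε)) := by field_simp; ring
    have : -(π / 32) / ε = -(π / (32 * ε)) := by rw [neg_div, div_div]
    linarith

theorem stmt7_general (N : ℕ) (a : ℝ) :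
    ∃ C > (0 : ℝ), ∃ ε' > (0 : ℝ), ∀ ε : ℝ, 0 < ε → ε < ε' →
      ∀ ν : EuclideanSpace ℝ (Fin N), ‖ν‖ = 1 →
      ∀ w : EuclideanSpace ℝ (Fin N) → ℝ,
        ContinuousOn w (Metric.closedBall 0 1) →
        (∀ x ∈ Metric.closedBall (0 : EuclideanSpace ℝ (Fin N)) 1, 0 ≤ w x) →
        ContDiffOn ℝ 2 w (Metric.ball 0 1) →
        (∀ x ∈ Metric.ball (0 : EuclideanSpace ℝ (Fin N)) 1, -lap w x ≤ a * w x) →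
        (∀ x ∈ Metric.ball (0 : EuclideanSpace ℝ (Fin N)) 1, ε < |⟪x, ν⟫| → w x = 0) →
        sSup (w '' Metric.ball 0 (1 / 2)) ≤ Real.exp (-C / ε) * sSup (w '' Metric.ball 0 1) := by
  obtain ⟨ε', hε', hsmall⟩ :=
    mem_nhdsGT_iff_exists_Ioo_subset.1 (eventually_lt_barrier_rate_and_two_mul_exp_le a N)
  refine ⟨π / 32, by positivity, ε', hε', fun ε hε hεε' ν hν w hwc hw0 hw2 hsub hvan => ?_⟩
  obtain ⟨ha, hexp⟩ := hsmall ⟨hε, hεε'⟩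
  calc sSup (w '' ball 0 (1 / 2)) ≤ 2 * exp (-(π / (16 * ε))) * sSup (w '' ball 0 1) :=
        sSup_image_ball_half_le hε hν ha hwc hw0 hw2 hsub hvan
    _ ≤ exp (-(π / 32) / ε) * sSup (w '' ball 0 1) :=
        mul_le_mul_of_nonneg_right hexp
          (Real.sSup_nonneg (Set.forall_mem_image.2 fun x hx => hw0 x (ball_subset_closedBall hx)))

/-- exponential decay estimate for nonnegative subsolutions of
`−Δw ≤ a w` on the unit ball that vanish outside the strip `{|x·ν| ≤ ε}`. -/
theorem stmt7 (N : ℕ) (hN : 2 ≤ N) (a : ℝ) (ha : 0 < a) :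
    ∃ C > (0 : ℝ), ∃ ε' > (0 : ℝ), ∀ ε : ℝ, 0 < ε → ε < ε' →
      ∀ ν : EuclideanSpace ℝ (Fin N), ‖ν‖ = 1 →
      ∀ w : EuclideanSpace ℝ (Fin N) → ℝ,
        ContinuousOn w (Metric.closedBall 0 1) →
        (∀ x ∈ Metric.closedBall (0 : EuclideanSpace ℝ (Fin N)) 1, 0 ≤ w x) →
        ContDiffOn ℝ 2 w (Metric.ball 0 1) →
        (∀ x ∈ Metric.ball (0 : EuclideanSpace ℝ (Fin N)) 1, -lap w x ≤ a * w x) →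
        (∀ x ∈ Metric.ball (0 : EuclideanSpace ℝ (Fin N)) 1, ε < |⟪x, ν⟫| → w x = 0) →
        sSup (w '' Metric.ball 0 (1 / 2)) ≤ Real.exp (-C / ε) * sSup (w '' Metric.ball 0 1) :=
  stmt7_general N a
end
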